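/- Let (M,g) be a pseudo-Riemannian manifold and k_{ab} a trace-free symmetric Killing tensor for g (so ∇_{(a}k_{bc)} = 0 and ∇^b k_{ba} = 0). If ĝ = e^{2V} g is another metric in the conformal class, then k_{ab} (appropriately weighted) is Killing for ĝ if and only if k_{ab}∇^b V = 0. -/

import Mathlib

noncomputable section
open scoped BigOperators

/-- Partial derivative `∂ᵢ f` of a real-valued function on the chart `Fin n → ℝ`. -/
def pd {n : ℕ} (i : Fin n) (f : (Fin n → ℝ) → ℝ) (x : Fin n → ℝ) : ℝ :=
  fderiv ℝ f x (fun j => if j = i then (1 : ℝ) else 0)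

/-- A pseudo-Riemannian metric on the global chart `Fin n → ℝ`. -/
structure PseudoRiemMetric (n : ℕ) where
  g : (Fin n → ℝ) → Fin n → Fin n → ℝ
  ginv : (Fin n → ℝ) → Fin n → Fin n → ℝ
  symm : ∀ x a b, g x a b = g x b a
  invl : ∀ x a b, (∑ c, ginv x a c * g x c b) = if a = b then (1 : ℝ) else 0
  smooth_g : ∀ a b, ContDiff ℝ (⊤ : ℕ∞) fun x => g x a b
  smooth_ginv : ∀ a b, ContDiff ℝ (⊤ : ℕ∞) fun x => ginv x a b

namespace PseudoRiemMetric

variable {n : ℕ} (M : PseudoRiemMetric n)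

/-- Christoffel symbols `Γ^a_{bc}` of the Levi-Civita connection. -/
def Γ (x : Fin n → ℝ) (a b c : Fin n) : ℝ :=
  (1 / 2) * ∑ d, M.ginv x a d *
    (pd b (fun y => M.g y d c) x + pd c (fun y => M.g y d b) x - pd d (fun y => M.g y b c) x)

/-- Covariant derivative `∇_a k_b` of a 1-form. -/
def covD1 (k : (Fin n → ℝ) → Fin n → ℝ) (x : Fin n → ℝ) (a b : Fin n) : ℝ :=
  pd a (fun y => k y b) x - ∑ c, M.Γ x c a b * k x c

/-- Covariant derivative `∇_a v^b` of a vector field. -/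
def covDvec (v : (Fin n → ℝ) → Fin n → ℝ) (x : Fin n → ℝ) (a b : Fin n) : ℝ :=
  pd a (fun y => v y b) x + ∑ c, M.Γ x b a c * v x c

/-- Covariant derivative `∇_a k_{bc}` of a covariant 2-tensor. -/
def covD2 (k : (Fin n → ℝ) → Fin n → Fin n → ℝ) (x : Fin n → ℝ) (a b c : Fin n) : ℝ :=
  pd a (fun y => k y b c) x - (∑ d, M.Γ x d a b * k x d c) - ∑ d, M.Γ x d a c * k x b d

/-- Divergence `∇_a v^a` of a vector field. -/
def divVec (v : (Fin n → ℝ) → Fin n → ℝ) (x : Fin n → ℝ) : ℝ :=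
  ∑ a, M.covDvec v x a a

/-- Laplacian `Δf = g^{ac} ∇_a ∇_c f` of a function. -/
def lap0 (f : (Fin n → ℝ) → ℝ) (x : Fin n → ℝ) : ℝ :=
  ∑ a, ∑ c, M.ginv x a c * M.covD1 (fun y b => pd b f y) x a c

/-- Laplacian `Δk_b = g^{ac} ∇_a ∇_c k_b` of a 1-form. -/
def lap1 (k : (Fin n → ℝ) → Fin n → ℝ) (x : Fin n → ℝ) (b : Fin n) : ℝ :=
  ∑ a, ∑ c, M.ginv x a c * M.covD2 (fun y p q => M.covD1 k y p q) x a c b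

/-- Riemann curvature `R_{ab}{}^c{}_d`, with the convention
`R_{ab}{}^c{}_d X^d = ∇_a ∇_b X^c - ∇_b ∇_a X^c`. -/
def Riem (x : Fin n → ℝ) (a b c d : Fin n) : ℝ :=
  pd a (fun y => M.Γ y c b d) x - pd b (fun y => M.Γ y c a d) x
    + (∑ e, M.Γ x c a e * M.Γ x e b d) - ∑ e, M.Γ x c b e * M.Γ x e a d

/-- Ricci curvature `R_{bd} = R_{ab}{}^a{}_d`. -/
def Ricci (x : Fin n → ℝ) (b d : Fin n) : ℝ := ∑ a, M.Riem x a b a d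

/-- Scalar curvature. -/
def scal (x : Fin n → ℝ) : ℝ := ∑ b, ∑ d, M.ginv x b d * M.Ricci x b d

/-- Trace of the Schouten tensor, `J = Scal/(2(n-1))`. -/
def Jsc (x : Fin n → ℝ) : ℝ := (1 / (2 * ((n : ℝ) - 1))) * M.scal x

/-- Schouten tensor, `P_{ab} = (Ric_{ab} - J g_{ab})/(n-2)`. -/
def Schouten (x : Fin n → ℝ) (a b : Fin n) : ℝ :=
  (1 / ((n : ℝ) - 2)) * (M.Ricci x a b - M.Jsc x * M.g x a b)

end PseudoRiemMetric

/-! Under `ĝ = e^{2V} g` the Christoffel symbols change by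
`Γ̂^a_{bc} = Γ^a_{bc} + δ^a_c Υ_b + δ^a_b Υ_c - g_{bc} Υ^a` with `Υ = dV`. For the weight-4 tensor
`e^{4V} k` the terms `Υ ⊗ k` cancel in the cyclic sum, which leaves
`∇̂_a k̂_{bc} + ∇̂_b k̂_{ca} + ∇̂_c k̂_{ab} = 2 e^{4V} (g_{ab} W_c + g_{bc} W_a + g_{ca} W_b)`
for a Killing tensor `k`, where `W_a = k_{ab} Υ^b`. Contracting `g ⊙ W = 0` with `g^{ab}` gives
`(n + 2) W = 0`. -/

lemma pd_mul {n : ℕ} (i : Fin n) {f g : (Fin n → ℝ) → ℝ} {x : Fin n → ℝ}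
    (hf : DifferentiableAt ℝ f x) (hg : DifferentiableAt ℝ g x) :
    pd i (fun y => f y * g y) x = pd i f x * g x + f x * pd i g x := by
  simp [pd, fderiv_fun_mul hf hg]
  ring

lemma pd_exp_const_mul {n : ℕ} (i : Fin n) (c : ℝ) {V : (Fin n → ℝ) → ℝ} {x : Fin n → ℝ}
    (hV : DifferentiableAt ℝ V x) :
    pd i (fun y => Real.exp (c * V y)) x = c * Real.exp (c * V x) * pd i V x := by
  simp [pd, fderiv_exp (hV.const_mul c), fderiv_const_mul hV c]
  ring

namespace PseudoRiemMetric

variable {n : ℕ} (M : PseudoRiemMetric n)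

def grad (V : (Fin n → ℝ) → ℝ) (x : Fin n → ℝ) (a : Fin n) : ℝ :=
  ∑ b, M.ginv x a b * pd b V x

def contractGrad (k : (Fin n → ℝ) → Fin n → Fin n → ℝ) (V : (Fin n → ℝ) → ℝ) (x : Fin n → ℝ)
    (a : Fin n) : ℝ :=
  ∑ b, k x a b * M.grad V x b

/-- For symmetric `k` this is `3 ∇_{(a} k_{bc)}`, the Killing operator. -/
def cyclicCovD2 (k : (Fin n → ℝ) → Fin n → Fin n → ℝ) (x : Fin n → ℝ) (a b c : Fin n) : ℝ :=
  M.covD2 k x a b c + M.covD2 k x b c a + M.covD2 k x c a b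

lemma ginv_mul_g_matrix (x : Fin n → ℝ) : Matrix.of (M.ginv x) * Matrix.of (M.g x) = 1 := by
  ext a b
  simp [Matrix.mul_apply, Matrix.one_apply, M.invl x a b]

lemma g_mul_ginv (x : Fin n → ℝ) (a b : Fin n) :
    (∑ c, M.g x a c * M.ginv x c b) = if a = b then (1 : ℝ) else 0 := by
  have h : Matrix.of (M.g x) * Matrix.of (M.ginv x) = 1 :=
    mul_eq_one_comm.mp (M.ginv_mul_g_matrix x)
  simpa [Matrix.mul_apply, Matrix.one_apply] using congr_fun (congr_fun h a) b

lemma sum_ginv_mul_g (x : Fin n → ℝ) : (∑ p, ∑ q, M.ginv x p q * M.g x p q) = n := by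
  have h (p : Fin n) : (∑ q, M.ginv x p q * M.g x p q) = 1 := by
    simpa [M.symm x p] using M.invl x p p
  simp [h]

lemma ginv_eq_inv_mul_of_g_eq_mul {M' : PseudoRiemMetric n} {x : Fin n → ℝ} {c : ℝ} (hc : c ≠ 0)
    (h : ∀ a b, M'.g x a b = c * M.g x a b) (a b : Fin n) :
    M'.ginv x a b = c⁻¹ * M.ginv x a b := by
  have hG : Matrix.of (M'.g x) = c • Matrix.of (M.g x) := by
    ext a b
    simp [h]
  have key : Matrix.of (M'.ginv x) = c⁻¹ • Matrix.of (M.ginv x) := by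
    rw [← Matrix.inv_eq_left_inv (M'.ginv_mul_g_matrix x), hG]
    refine Matrix.inv_eq_left_inv ?_
    rw [smul_mul_smul_comm, inv_mul_cancel₀ hc, one_smul, M.ginv_mul_g_matrix]
  simpa using congr_fun (congr_fun key a) b

lemma covD2_mul_left {f : (Fin n → ℝ) → ℝ} {k : (Fin n → ℝ) → Fin n → Fin n → ℝ}
    {x : Fin n → ℝ} (hf : DifferentiableAt ℝ f x)
    (hk : ∀ p q, DifferentiableAt ℝ (fun y => k y p q) x) (a b c : Fin n) :
    M.covD2 (fun y p q => f y * k y p q) x a b c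
      = pd a f x * k x b c + f x * M.covD2 k x a b c := by
  simp only [covD2, pd_mul a hf (hk b c), mul_sub, Finset.mul_sum, mul_left_comm (f x)]
  ring

lemma eq_zero_of_cyclic_g_mul_eq_zero (x : Fin n → ℝ) {W : Fin n → ℝ}
    (h : ∀ p q r, M.g x p q * W r + M.g x q r * W p + M.g x r p * W q = 0) (a : Fin n) :
    W a = 0 := by
  have htrace : (∑ p, ∑ q, M.ginv x p q * (M.g x p q * W a + M.g x q a * W p + M.g x a p * W q))
      = (n + 2) * W a := by
    have hg : (∑ p, ∑ q, M.ginv x p q * (M.g x p q * W a)) = n * W a := by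
      simp only [← mul_assoc, ← Finset.sum_mul, M.sum_ginv_mul_g]
    have hWp : (∑ p, ∑ q, M.ginv x p q * (M.g x q a * W p)) = W a := by
      simp only [← mul_assoc, ← Finset.sum_mul, M.invl, ite_mul, one_mul, zero_mul,
        Finset.sum_ite_eq', Finset.mem_univ, if_true]
    have hWq : (∑ p, ∑ q, M.ginv x p q * (M.g x a p * W q)) = W a := by
      rw [Finset.sum_comm]
      simp only [mul_left_comm (M.ginv x _ _), ← mul_assoc, ← Finset.sum_mul, M.g_mul_ginv,
        ite_mul, one_mul, zero_mul, Finset.sum_ite_eq, Finset.mem_univ, if_true]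
    simp only [mul_add, Finset.sum_add_distrib, hg, hWp, hWq]
    ring
  have hpos : (n + 2 : ℝ) ≠ 0 := by positivity
  simpa [h, hpos] using htrace.symm

end PseudoRiemMetric

section Conformal

variable {n : ℕ} {M M' : PseudoRiemMetric n} {V : (Fin n → ℝ) → ℝ} {x : Fin n → ℝ}

lemma pd_g_of_conformal (hconf : ∀ x a b, M'.g x a b = Real.exp (2 * V x) * M.g x a b)
    (hV : DifferentiableAt ℝ V x) (i a b : Fin n) :
    pd i (fun y => M'.g y a b) x
      = Real.exp (2 * V x) * (pd i (fun y => M.g y a b) x + 2 * pd i V x * M.g x a b) := by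
  have hg : DifferentiableAt ℝ (fun y => M.g y a b) x :=
    (M.smooth_g a b).differentiable (by simp) x
  simp only [hconf]
  rw [pd_mul i (hV.const_mul 2).exp hg, pd_exp_const_mul i 2 hV]
  ring

lemma Γ_of_conformal (hconf : ∀ x a b, M'.g x a b = Real.exp (2 * V x) * M.g x a b)
    (hV : DifferentiableAt ℝ V x) (a b c : Fin n) :
    M'.Γ x a b c = M.Γ x a b c + (if a = c then pd b V x else 0)
      + (if a = b then pd c V x else 0) - M.g x b c * M.grad V x a := by
  have hterm (d : Fin n) :
      M'.ginv x a d * (pd b (fun y => M'.g y d c) x + pd c (fun y => M'.g y d b) x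
        - pd d (fun y => M'.g y b c) x)
      = M.ginv x a d * (pd b (fun y => M.g y d c) x + pd c (fun y => M.g y d b) x
          - pd d (fun y => M.g y b c) x)
        + 2 * (pd b V x * (M.ginv x a d * M.g x d c) + pd c V x * (M.ginv x a d * M.g x d b)
          - M.g x b c * (M.ginv x a d * pd d V x)) := by
    rw [M.ginv_eq_inv_mul_of_g_eq_mul (Real.exp_ne_zero _) (hconf x),
      pd_g_of_conformal hconf hV, pd_g_of_conformal hconf hV, pd_g_of_conformal hconf hV]
    field_simp
    ring
  simp only [PseudoRiemMetric.Γ, PseudoRiemMetric.grad, hterm, Finset.sum_add_distrib,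
    Finset.sum_sub_distrib, ← Finset.mul_sum, M.invl]
  split_ifs <;> ring

lemma sum_Γ_mul_of_conformal (hconf : ∀ x a b, M'.g x a b = Real.exp (2 * V x) * M.g x a b)
    (hV : DifferentiableAt ℝ V x) (T : Fin n → ℝ) (a b : Fin n) :
    ∑ d, M'.Γ x d a b * T d
      = ∑ d, M.Γ x d a b * T d + pd a V x * T b + pd b V x * T a
        - M.g x a b * ∑ d, M.grad V x d * T d := by
  simp only [Γ_of_conformal hconf hV, add_mul, sub_mul, ite_mul, zero_mul,
    Finset.sum_add_distrib, Finset.sum_sub_distrib, Finset.sum_ite_eq', Finset.mem_univ, if_true,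
    Finset.mul_sum, mul_assoc]

lemma covD2_of_conformal (hconf : ∀ x a b, M'.g x a b = Real.exp (2 * V x) * M.g x a b)
    (hV : DifferentiableAt ℝ V x) (k : (Fin n → ℝ) → Fin n → Fin n → ℝ) (a b c : Fin n) :
    M'.covD2 k x a b c
      = M.covD2 k x a b c - 2 * pd a V x * k x b c - pd b V x * k x a c - pd c V x * k x b a
        + M.g x a b * (∑ d, M.grad V x d * k x d c)
        + M.g x a c * ∑ d, M.grad V x d * k x b d := by
  simp only [PseudoRiemMetric.covD2]
  rw [sum_Γ_mul_of_conformal hconf hV (fun d => k x d c),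
    sum_Γ_mul_of_conformal hconf hV (fun d => k x b d)]
  ring

lemma cyclicCovD2_exp_mul_of_conformal
    (hconf : ∀ x a b, M'.g x a b = Real.exp (2 * V x) * M.g x a b) (hV : DifferentiableAt ℝ V x)
    {k : (Fin n → ℝ) → Fin n → Fin n → ℝ} (hk_symm : ∀ p q, k x p q = k x q p)
    (hk : ∀ p q, DifferentiableAt ℝ (fun y => k y p q) x) (a b c : Fin n) :
    M'.cyclicCovD2 (fun y p q => Real.exp (4 * V y) * k y p q) x a b c
      = Real.exp (4 * V x) * (M.cyclicCovD2 k x a b c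
        + 2 * (M.g x a b * M.contractGrad k V x c + M.g x b c * M.contractGrad k V x a
          + M.g x c a * M.contractGrad k V x b)) := by
  have hleft (p : Fin n) :
      ∑ d, M.grad V x d * (Real.exp (4 * V x) * k x d p)
        = Real.exp (4 * V x) * M.contractGrad k V x p := by
    simp only [PseudoRiemMetric.contractGrad, Finset.mul_sum, hk_symm _ p]
    exact Finset.sum_congr rfl fun d _ => by ring
  have hright (p : Fin n) :
      ∑ d, M.grad V x d * (Real.exp (4 * V x) * k x p d)
        = Real.exp (4 * V x) * M.contractGrad k V x p := by
    simp only [PseudoRiemMetric.contractGrad, Finset.mul_sum]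
    exact Finset.sum_congr rfl fun d _ => by ring
  simp only [PseudoRiemMetric.cyclicCovD2, covD2_of_conformal hconf hV,
    M.covD2_mul_left (hV.const_mul 4).exp hk, pd_exp_const_mul _ 4 hV, hleft, hright]
  rw [hk_symm c b, hk_symm c a, hk_symm b a, M.symm x a c, M.symm x b a, M.symm x c b]
  ring

end Conformal

theorem killing_in_second_scale_iff_general {n : ℕ} (M M' : PseudoRiemMetric n)
    (V : (Fin n → ℝ) → ℝ) (hV : ContDiff ℝ (⊤ : ℕ∞) V)
    (hconf : ∀ x a b, M'.g x a b = Real.exp (2 * V x) * M.g x a b)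
    (k : (Fin n → ℝ) → Fin n → Fin n → ℝ)
    (hk_symm : ∀ x a b, k x a b = k x b a)
    (hk_smooth : ∀ a b, ContDiff ℝ (⊤ : ℕ∞) fun x => k x a b)
    (hKilling : ∀ x a b c,
      M.covD2 k x a b c + M.covD2 k x b c a + M.covD2 k x c a b = 0) :
    (∀ x a b c,
        M'.covD2 (fun y p q => Real.exp (4 * V y) * k y p q) x a b c
          + M'.covD2 (fun y p q => Real.exp (4 * V y) * k y p q) x b c a
          + M'.covD2 (fun y p q => Real.exp (4 * V y) * k y p q) x c a b = 0)
      ↔ (∀ x a, (∑ b, k x a b * (∑ c, M.ginv x b c * pd c V x)) = 0) := by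
  have hcyc (x : Fin n → ℝ) (a b c : Fin n) :
      M'.cyclicCovD2 (fun y p q => Real.exp (4 * V y) * k y p q) x a b c
        = 2 * Real.exp (4 * V x) * (M.g x a b * M.contractGrad k V x c
          + M.g x b c * M.contractGrad k V x a + M.g x c a * M.contractGrad k V x b) := by
    rw [cyclicCovD2_exp_mul_of_conformal hconf (hV.differentiable (by simp) x) (hk_symm x)
      (fun p q => (hk_smooth p q).differentiable (by simp) x),
      show M.cyclicCovD2 k x a b c = 0 from hKilling x a b c]
    ring
  change (∀ x a b c, M'.cyclicCovD2 _ x a b c = 0) ↔ ∀ x a, M.contractGrad k V x a = 0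
  simp only [hcyc, mul_eq_zero, OfNat.ofNat_ne_zero, Real.exp_ne_zero, false_or]
  constructor
  · intro H x
    exact M.eq_zero_of_cyclic_g_mul_eq_zero x (H x)
  · intro H x a b c
    simp [H]

/-- if `k` is a trace-free symmetric Killing tensor for `g`, then
the weight-4 rescaling `e^{4V} k` is a Killing tensor for `ĝ = e^{2V} g` iff
`k_{ab} ∇^b V = 0`. -/
theorem killing_in_second_scale_iff {n : ℕ} (hn : 1 ≤ n) (M M' : PseudoRiemMetric n)
    (V : (Fin n → ℝ) → ℝ) (hV : ContDiff ℝ (⊤ : ℕ∞) V)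
    (hconf : ∀ x a b, M'.g x a b = Real.exp (2 * V x) * M.g x a b)
    (k : (Fin n → ℝ) → Fin n → Fin n → ℝ)
    (hk_symm : ∀ x a b, k x a b = k x b a)
    (hk_tf : ∀ x, (∑ a, ∑ b, M.ginv x a b * k x a b) = 0)
    (hk_smooth : ∀ a b, ContDiff ℝ (⊤ : ℕ∞) fun x => k x a b)
    (hKilling : ∀ x a b c,
      M.covD2 k x a b c + M.covD2 k x b c a + M.covD2 k x c a b = 0)
    (hdivfree : ∀ x a, (∑ b, ∑ c, M.ginv x b c * M.covD2 k x c b a) = 0) :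
    (∀ x a b c,
        M'.covD2 (fun y p q => Real.exp (4 * V y) * k y p q) x a b c
          + M'.covD2 (fun y p q => Real.exp (4 * V y) * k y p q) x b c a
          + M'.covD2 (fun y p q => Real.exp (4 * V y) * k y p q) x c a b = 0)
      ↔ (∀ x a, (∑ b, k x a b * (∑ c, M.ginv x b c * pd c V x)) = 0) :=
  killing_in_second_scale_iff_general M M' V hV hconf k hk_symm hk_smooth hKilling
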